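/- Let n ≥ 3 and 0 < r < s, and for t > 0 define ψ_t : ℝⁿ → ℝ by ψ_t(x) = (n/2)t^{2−n} − ((n−2)t^{−n}/2)|x|² for |x| ≤ t and ψ_t(x) = |x|^{2−n} for |x| > t. Then the function Φ_{r,s} := ψ_r − ψ_s is continuously differentiable on ℝⁿ with Lipschitz continuous gradient (i.e., Φ_{r,s} ∈ C^{1,1}(ℝⁿ)), is nonnegative on all of ℝⁿ, and vanishes identically on ℝⁿ \ B_s(0). -/

import Mathlib

/-!
With `p = (2 - n) / 2`, `ψ_t(x) = h_t(|x|²)`, where `h_t` is `v ↦ v ^ p` on `[t², ∞)` continued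
to the left by its tangent line at `t²`. Hence `h_t` is differentiable with derivative
`p · max(v, t²) ^ (p - 1)`, which is Lipschitz, and `H = h_r - h_s` vanishes on `[s², ∞)`.
As `p ≤ 0`, `H' ≤ 0`, so `H` decreases to `0`, which gives `Φ ≥ 0`. The gradient
`∇Φ(x) = 2 H'(|x|²) x` is Lipschitz because `x ↦ H'(|x|²)` is Lipschitz, bounded and supported
in the closed ball of radius `s`.
-/

open MeasureTheory

/-- Caffarelli's auxiliary function `ψ_t`: the paraboloid
`(n/2)t^{2−n} − ((n−2)t^{−n}/2)|x|²` inside the closed ball of radius `t` and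
the fundamental-solution profile `|x|^{2−n}` outside. -/
noncomputable def psi (n : ℕ) (t : ℝ) (x : EuclideanSpace ℝ (Fin n)) : ℝ :=
  if ‖x‖ ≤ t then
    ((n : ℝ) / 2) * t ^ ((2 : ℝ) - (n : ℝ))
      - ((n : ℝ) - 2) * t ^ (-(n : ℝ)) / 2 * ‖x‖ ^ 2
  else ‖x‖ ^ ((2 : ℝ) - (n : ℝ))

/-- Caffarelli's key test function `Φ_{r,s} = ψ_r − ψ_s`. -/
noncomputable def Phi (n : ℕ) (r s : ℝ) (x : EuclideanSpace ℝ (Fin n)) : ℝ :=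
  psi n r x - psi n s x

open Set NNReal

theorem HasDerivAt.ite_le {f g : ℝ → ℝ} {a d : ℝ} (hf : HasDerivAt f d a)
    (hg : HasDerivAt g d a) (hfg : f a = g a) :
    HasDerivAt (fun v => if v ≤ a then f v else g v) d a := by
  have hleft : HasDerivWithinAt (fun v => if v ≤ a then f v else g v) d (Iic a) a :=
    hf.hasDerivWithinAt.congr (fun v hv => if_pos hv) (if_pos le_rfl)
  have hright : HasDerivWithinAt (fun v => if v ≤ a then f v else g v) d (Ici a) a :=
    hg.hasDerivWithinAt.congr (fun v (hv : a ≤ v) => by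
      split_ifs with h
      exacts [by rw [le_antisymm h hv, hfg], rfl])
      (by simp [hfg])
  simpa [Iic_union_Ici] using hleft.union hright

noncomputable def rpowTangentExt (p T v : ℝ) : ℝ :=
  if v ≤ T then T ^ p + p * T ^ (p - 1) * (v - T) else v ^ p

section rpowTangentExt

variable {p T v : ℝ}

theorem rpowTangentExt_of_le (hv : T ≤ v) : rpowTangentExt p T v = v ^ p := by
  rcases hv.eq_or_lt with rfl | hv
  · simp [rpowTangentExt]
  · simp [rpowTangentExt, hv.not_ge]

theorem hasDerivAt_rpowTangentExt (hT : 0 < T) (v : ℝ) :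
    HasDerivAt (rpowTangentExt p T) (p * max v T ^ (p - 1)) v := by
  have htangent : ∀ w, HasDerivAt (fun v => T ^ p + p * T ^ (p - 1) * (v - T))
      (p * T ^ (p - 1)) w := fun w => by
    simpa using ((hasDerivAt_id w).sub_const T).const_mul (p * T ^ (p - 1)) |>.const_add (T ^ p)
  have hrpow : ∀ w, 0 < w → HasDerivAt (fun v => v ^ p) (p * w ^ (p - 1)) w :=
    fun w hw => Real.hasDerivAt_rpow_const (Or.inl hw.ne')
  rcases lt_trichotomy v T with hv | rfl | hv
  · rw [max_eq_right hv.le]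
    refine (htangent v).congr_of_eventuallyEq ?_
    filter_upwards [Iio_mem_nhds hv] with w hw
    simp [rpowTangentExt, (mem_Iio.1 hw).le]
  · rw [max_self]
    exact (htangent v).ite_le (hrpow v hT) (by simp)
  · rw [max_eq_left hv.le]
    refine (hrpow v (hT.trans hv)).congr_of_eventuallyEq ?_
    filter_upwards [Ioi_mem_nhds hv] with w hw
    simp [rpowTangentExt, (mem_Ioi.1 hw).not_ge]

theorem lipschitzWith_mul_rpow_max (c q : ℝ) (hT : 0 < T) (hq : q ≤ 1) :
    LipschitzWith ‖c * q * T ^ (q - 1)‖₊ (fun v => c * max v T ^ q) := by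
  have hderiv : ∀ w ∈ Ici T, HasDerivAt (fun w => c * w ^ q) (c * (q * w ^ (q - 1))) w :=
    fun w hw => (Real.hasDerivAt_rpow_const (Or.inl (hT.trans_le hw).ne')).const_mul c
  have hon : LipschitzOnWith ‖c * q * T ^ (q - 1)‖₊ (fun w => c * w ^ q) (Ici T) := by
    refine (convex_Ici T).lipschitzOnWith_of_nnnorm_deriv_le
      (fun w hw => (hderiv w hw).differentiableAt) fun w hw => ?_
    rw [(hderiv w hw).deriv, ← NNReal.coe_le_coe, coe_nnnorm, coe_nnnorm, ← mul_assoc,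
      Real.norm_eq_abs, Real.norm_eq_abs, abs_mul _ (w ^ _), abs_mul _ (T ^ _),
      abs_of_pos (Real.rpow_pos_of_pos (hT.trans_le hw) _), abs_of_pos (Real.rpow_pos_of_pos hT _)]
    exact mul_le_mul_of_nonneg_left
      (Real.rpow_le_rpow_of_nonpos hT hw (by linarith)) (abs_nonneg _)
  have := hon.comp (LipschitzWith.id.max_const T).lipschitzOnWith (s := univ)
    (fun w _ => le_max_right w T)
  rwa [mul_one, lipschitzOnWith_univ] at this

theorem rpowTangentExt_sub_eq_zero {R S : ℝ} (hRS : R ≤ S) (hv : S ≤ v) :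
    rpowTangentExt p R v - rpowTangentExt p S v = 0 := by
  rw [rpowTangentExt_of_le (hRS.trans hv), rpowTangentExt_of_le hv, sub_self]

theorem antitone_rpowTangentExt_sub {R S : ℝ} (hp : p ≤ 0) (hR : 0 < R) (hRS : R ≤ S) :
    Antitone fun v => rpowTangentExt p R v - rpowTangentExt p S v := by
  have hderiv : ∀ v, HasDerivAt (fun v => rpowTangentExt p R v - rpowTangentExt p S v)
      (p * max v R ^ (p - 1) - p * max v S ^ (p - 1)) v := fun v =>
    (hasDerivAt_rpowTangentExt hR v).sub (hasDerivAt_rpowTangentExt (hR.trans_le hRS) v)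
  refine antitone_of_deriv_nonpos (fun v => (hderiv v).differentiableAt) fun v => ?_
  rw [(hderiv v).deriv, ← mul_sub]
  exact mul_nonpos_of_nonpos_of_nonneg hp (sub_nonneg.2 (Real.rpow_le_rpow_of_nonpos
    (lt_max_of_lt_right hR) (max_le_max le_rfl hRS) (by linarith)))

theorem rpowTangentExt_sub_nonneg {R S : ℝ} (hp : p ≤ 0) (hR : 0 < R) (hRS : R ≤ S) (v : ℝ) :
    0 ≤ rpowTangentExt p R v - rpowTangentExt p S v :=
  calc 0 = rpowTangentExt p R (max v S) - rpowTangentExt p S (max v S) :=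
        (rpowTangentExt_sub_eq_zero hRS (le_max_right v S)).symm
    _ ≤ rpowTangentExt p R v - rpowTangentExt p S v :=
        antitone_rpowTangentExt_sub hp hR hRS (le_max_left v S)

end rpowTangentExt

theorem psi_eq_rpowTangentExt {n : ℕ} {t : ℝ} (ht : 0 < t) (x : EuclideanSpace ℝ (Fin n)) :
    psi n t x = rpowTangentExt ((2 - n) / 2) (t ^ 2) (‖x‖ ^ 2) := by
  have hsq : ∀ {u : ℝ}, 0 ≤ u → ∀ c : ℝ, (u ^ 2) ^ c = u ^ (2 * c) := fun hu c =>
    (Real.rpow_natCast_mul hu 2 c).symm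
  have hle : ‖x‖ ^ 2 ≤ t ^ 2 ↔ ‖x‖ ≤ t := pow_le_pow_iff_left₀ (norm_nonneg x) ht.le two_ne_zero
  unfold psi rpowTangentExt
  split_ifs with hx hx' hx'
  · have hmul : t ^ (-(n : ℝ)) * t ^ 2 = t ^ ((2 : ℝ) - n) := by
      rw [← Real.rpow_natCast t 2, ← Real.rpow_add ht]; ring_nf
    rw [hsq ht.le, hsq ht.le, show 2 * ((2 - n) / 2 : ℝ) = 2 - n by ring,
      show 2 * ((2 - n) / 2 - 1 : ℝ) = -n by ring]
    linear_combination (((2 : ℝ) - n) / 2) * hmul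
  · exact absurd (hle.2 hx) hx'
  · exact absurd (hle.1 hx') hx
  · rw [hsq (norm_nonneg x)]; ring_nf

section NormSq

variable {E : Type*} [SeminormedAddCommGroup E] {g : ℝ → ℝ} {K R : ℝ≥0}

theorem comp_norm_sq_eq_comp_min (hzero : ∀ v, (R : ℝ) ^ 2 ≤ v → g v = 0) (x : E) :
    g (‖x‖ ^ 2) = g (min ‖x‖ R ^ 2) := by
  rcases le_total ‖x‖ R with hx | hx
  · rw [min_eq_left hx]
  · rw [min_eq_right hx, hzero _ le_rfl, hzero _ (pow_le_pow_left₀ R.coe_nonneg hx 2)]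

theorem abs_comp_norm_sq_le (hg : LipschitzWith K g) (hzero : ∀ v, (R : ℝ) ^ 2 ≤ v → g v = 0)
    (x : E) : |g (‖x‖ ^ 2)| ≤ K * R ^ 2 := by
  have hm : 0 ≤ min ‖x‖ R := le_min (norm_nonneg x) R.coe_nonneg
  have hmR : min ‖x‖ R ≤ R := min_le_right _ _
  calc |g (‖x‖ ^ 2)| = dist (g (min ‖x‖ R ^ 2)) (g (R ^ 2)) := by
        rw [comp_norm_sq_eq_comp_min hzero, hzero _ le_rfl, Real.dist_eq, sub_zero]
    _ ≤ K * dist (min ‖x‖ R ^ 2) (R ^ 2) := hg.dist_le_mul _ _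
    _ ≤ K * R ^ 2 := by
        gcongr
        rw [Real.dist_eq, abs_of_nonpos (by nlinarith)]
        nlinarith

theorem lipschitzWith_comp_norm_sq (hg : LipschitzWith K g)
    (hzero : ∀ v, (R : ℝ) ^ 2 ≤ v → g v = 0) :
    LipschitzWith (2 * R * K) (fun x : E => g (‖x‖ ^ 2)) := by
  refine LipschitzWith.of_dist_le_mul fun x y => ?_
  have hmin : dist (min ‖x‖ R) (min ‖y‖ R) ≤ dist x y := by
    simpa using (lipschitzWith_one_norm.min_const (R : ℝ)).dist_le_mul x y
  have hsum : |min ‖x‖ R + min ‖y‖ R| ≤ 2 * R := by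
    have hx := le_min (norm_nonneg x) R.coe_nonneg
    have hy := le_min (norm_nonneg y) R.coe_nonneg
    exact abs_le.2 ⟨by linarith [R.coe_nonneg],
      by linarith [min_le_right ‖x‖ (R : ℝ), min_le_right ‖y‖ (R : ℝ)]⟩
  calc dist (g (‖x‖ ^ 2)) (g (‖y‖ ^ 2))
      = dist (g (min ‖x‖ R ^ 2)) (g (min ‖y‖ R ^ 2)) := by
        rw [comp_norm_sq_eq_comp_min hzero, comp_norm_sq_eq_comp_min hzero]
    _ ≤ K * dist (min ‖x‖ R ^ 2) (min ‖y‖ R ^ 2) := hg.dist_le_mul _ _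
    _ = K * (|min ‖x‖ R + min ‖y‖ R| * dist (min ‖x‖ R) (min ‖y‖ R)) := by
        rw [Real.dist_eq, Real.dist_eq, ← abs_mul]; ring_nf
    _ ≤ K * (2 * R * dist x y) := by gcongr
    _ = ↑(2 * R * K) * dist x y := by push_cast; ring

end NormSq

theorem lipschitzWith_smul_self {E : Type*} [SeminormedAddCommGroup E] [NormedSpace ℝ E]
    {f : E → ℝ} {K M R : ℝ≥0} (hf : LipschitzWith K f) (hbound : ∀ x, |f x| ≤ M)
    (hzero : ∀ x, (R : ℝ) < ‖x‖ → f x = 0) :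
    LipschitzWith (M + R * K) (fun x => f x • x) := by
  refine LipschitzWith.of_dist_le_mul fun x y => ?_
  have hdiff : |f x - f y| ≤ K * ‖x - y‖ := by
    simpa [Real.dist_eq, dist_eq_norm] using hf.dist_le_mul x y
  have hxy : 0 ≤ ‖x - y‖ := norm_nonneg _
  rw [dist_eq_norm, dist_eq_norm]
  push_cast
  by_cases hy : ‖y‖ ≤ R
  · calc ‖f x • x - f y • y‖ = ‖f x • (x - y) + (f x - f y) • y‖ := by
          rw [smul_sub, sub_smul]; abel_nf
      _ ≤ |f x| * ‖x - y‖ + |f x - f y| * ‖y‖ := by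
          refine (norm_add_le _ _).trans ?_
          rw [norm_smul, norm_smul, Real.norm_eq_abs, Real.norm_eq_abs]
      _ ≤ M * ‖x - y‖ + K * ‖x - y‖ * R := by
          gcongr
          exact hbound x
      _ = (M + R * K) * ‖x - y‖ := by ring
  rw [hzero y (not_le.1 hy), zero_smul, sub_zero]
  by_cases hx : ‖x‖ ≤ R
  · calc ‖f x • x‖ = |f x - f y| * ‖x‖ := by
          rw [norm_smul, hzero y (not_le.1 hy), sub_zero, Real.norm_eq_abs]
      _ ≤ K * ‖x - y‖ * R := by gcongr
      _ ≤ (M + R * K) * ‖x - y‖ := by nlinarith [M.coe_nonneg]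
  · rw [hzero x (not_le.1 hx), zero_smul, norm_zero]
    positivity

theorem hasFDerivAt_comp_norm_sq {E : Type*} [NormedAddCommGroup E] [InnerProductSpace ℝ E]
    {h : ℝ → ℝ} {d : ℝ} {x : E} (hh : HasDerivAt h d (‖x‖ ^ 2)) :
    HasFDerivAt (fun x => h (‖x‖ ^ 2)) (d • (2 • innerSL ℝ x)) x :=
  hh.comp_hasFDerivAt x (hasStrictFDerivAt_norm_sq x).hasFDerivAt

theorem lipschitzWith_fderiv_comp_norm_sq {E : Type*} [NormedAddCommGroup E]
    [InnerProductSpace ℝ E] {h h' : ℝ → ℝ} {K R : ℝ≥0} (hh : ∀ v, HasDerivAt h (h' v) v)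
    (hh' : LipschitzWith K h') (hzero : ∀ v, (R : ℝ) ^ 2 ≤ v → h' v = 0) :
    LipschitzWith (6 * K * R ^ 2) (fderiv ℝ (fun x : E => h (‖x‖ ^ 2))) := by
  have hfderiv : fderiv ℝ (fun x : E => h (‖x‖ ^ 2))
      = InnerProductSpace.toDualMap ℝ E ∘ (fun x => (2 : ℝ) • x) ∘ fun x => h' (‖x‖ ^ 2) • x := by
    ext x y
    simp only [(hasFDerivAt_comp_norm_sq (hh _)).fderiv, smul_apply,
      coe_innerSL_apply, nsmul_eq_mul, Nat.cast_ofNat, smul_eq_mul, Function.comp_apply,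
      map_smul, InnerProductSpace.toDualMap_apply_apply]
    ring
  have hsmul := lipschitzWith_smul_self (M := K * R ^ 2)
    (lipschitzWith_comp_norm_sq (E := E) hh' hzero)
    (fun x => by push_cast; exact abs_comp_norm_sq_le hh' hzero x)
    fun x hx => hzero _ (pow_le_pow_left₀ R.coe_nonneg hx.le 2)
  rw [hfderiv]
  refine ((InnerProductSpace.toDualMap ℝ E).isometry.lipschitz.comp
    ((lipschitzWith_smul (2 : ℝ)).comp hsmul)).weaken (le_of_eq ?_)
  rw [show ‖(2 : ℝ)‖₊ = 2 from NNReal.eq (by norm_num)]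
  ring

/-- For `n ≥ 3` and `0 < r < s`, the function `Φ_{r,s} = ψ_r − ψ_s`
is `C^{1,1}` (continuously differentiable with Lipschitz gradient), nonnegative,
and vanishes identically outside the ball `B_s(0)`. -/
theorem stmt_2 (n : ℕ) (hn : 3 ≤ n) (r s : ℝ) (hr : 0 < r) (hrs : r < s) :
    ContDiff ℝ 1 (Phi n r s) ∧
    (∃ K : NNReal, LipschitzWith K (fderiv ℝ (Phi n r s))) ∧
    (∀ x, 0 ≤ Phi n r s x) ∧
    (∀ x ∉ Metric.ball (0 : EuclideanSpace ℝ (Fin n)) s, Phi n r s x = 0) := by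
  have hs : 0 < s := hr.trans hrs
  have hrs2 : r ^ 2 ≤ s ^ 2 := pow_le_pow_left₀ hr.le hrs.le 2
  set p : ℝ := (2 - n) / 2
  have hp : p ≤ 0 := by
    have : (3 : ℝ) ≤ n := by exact_mod_cast hn
    simp only [p]; linarith
  set H : ℝ → ℝ := fun v => rpowTangentExt p (r ^ 2) v - rpowTangentExt p (s ^ 2) v
  set H' : ℝ → ℝ := fun v => p * max v (r ^ 2) ^ (p - 1) - p * max v (s ^ 2) ^ (p - 1)
  have hPhi : Phi n r s = fun x => H (‖x‖ ^ 2) :=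
    funext fun x => by rw [Phi, psi_eq_rpowTangentExt hr, psi_eq_rpowTangentExt hs]
  have hH : ∀ v, HasDerivAt H (H' v) v := fun v =>
    (hasDerivAt_rpowTangentExt (pow_pos hr 2) v).sub (hasDerivAt_rpowTangentExt (pow_pos hs 2) v)
  have hH' := (lipschitzWith_mul_rpow_max p (p - 1) (pow_pos hr 2) (by linarith)).sub
    (lipschitzWith_mul_rpow_max p (p - 1) (pow_pos hs 2) (by linarith))
  have hH'zero : ∀ v, (s.toNNReal : ℝ) ^ 2 ≤ v → H' v = 0 := fun v hv => by
    rw [Real.coe_toNNReal s hs.le] at hv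
    simp only [H', max_eq_left hv, max_eq_left (hrs2.trans hv), sub_self]
  rw [hPhi]
  refine ⟨?_, ⟨_, lipschitzWith_fderiv_comp_norm_sq hH hH' hH'zero⟩,
    fun x => rpowTangentExt_sub_nonneg hp (pow_pos hr 2) hrs2 _, fun x hx => ?_⟩
  · have hH1 : ContDiff ℝ 1 H := contDiff_one_iff_deriv.2
      ⟨fun v => (hH v).differentiableAt, deriv_eq hH ▸ hH'.continuous⟩
    exact hH1.comp (contDiff_norm_sq ℝ)
  · exact rpowTangentExt_sub_eq_zero hrs2 (pow_le_pow_left₀ hs.le (by simpa using hx) 2)
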